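/- For every ρ ≥ 1, the Kolmogorov–Smirnov distance between N(0, ρ²) and N(0, 1) satisfies d_KS( N(0,ρ²), N(0,1) ) ≤ √( (4/√(2π)) · W₁( N(0,ρ²), N(0,1) ) ) ≤ √(4/π) · (ρ² − 1)^{1/4}. -/

import Mathlib

open MeasureTheory ProbabilityTheory

/-- Kolmogorov–Smirnov distance between two measures on `ℝ`:
`d_KS(μ,ν) = sup_{x ∈ ℝ} |μ(−∞,x] − ν(−∞,x]|`. -/
noncomputable def dKS (μ ν : Measure ℝ) : ℝ :=
  ⨆ x : ℝ, |(μ (Set.Iic x)).toReal - (ν (Set.Iic x)).toReal|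

/-- `L¹`-Wasserstein distance:
`W₁(μ,ν) = sup { |∫ h dμ − ∫ h dν| : h is 1-Lipschitz }`. -/
noncomputable def W1 (μ ν : Measure ℝ) : ℝ :=
  ⨆ h : {h : ℝ → ℝ // LipschitzWith 1 h}, |(∫ x, h.1 x ∂μ) - ∫ x, h.1 x ∂ν|

open Real Set
open scoped NNReal ENNReal

section Aux

lemma integral_gaussianReal_eq (v : ℝ≥0) (hv : v ≠ 0) (g : ℝ → ℝ) :
    ∫ x, g x ∂(gaussianReal 0 v) = ∫ x, gaussianPDFReal 0 v x * g x := by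
  rw [gaussianReal_of_var_ne_zero 0 hv]
  have h : gaussianPDF 0 v = fun x => ((Real.toNNReal (gaussianPDFReal 0 v x) : ℝ≥0) : ℝ≥0∞) := rfl
  rw [h, integral_withDensity_eq_integral_smul (measurable_gaussianPDFReal 0 v).real_toNNReal]
  congr 1; ext x
  rw [NNReal.smul_def, smul_eq_mul, Real.coe_toNNReal _ (gaussianPDFReal_nonneg 0 v x)]

lemma integral_Ioi_xexp : ∫ x in Ioi (0:ℝ), x * Real.exp (-(2:ℝ)⁻¹ * x^2) = 1 := by
  have A : ∀ x:ℝ, HasDerivAt (fun y => -Real.exp (-(2:ℝ)⁻¹ * y^2))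
      (x * Real.exp (-(2:ℝ)⁻¹ * x^2)) x := by
    intro x
    have h := (((hasDerivAt_pow 2 x).const_mul (-(2:ℝ)⁻¹)).exp).neg
    refine h.congr_deriv ?_
    simp
    ring
  have B : Filter.Tendsto (fun y:ℝ => -Real.exp (-(2:ℝ)⁻¹ * y^2)) Filter.atTop (nhds 0) := by
    rw [show (0:ℝ) = -0 by ring]
    exact (Real.tendsto_exp_atBot.comp
      ((Filter.tendsto_pow_atTop two_ne_zero).const_mul_atTop_of_neg (by norm_num))).neg
  have h2 := integral_Ioi_of_hasDerivAt_of_tendsto' (a := (0:ℝ))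
    (f := fun y => -Real.exp (-(2:ℝ)⁻¹ * y^2)) (fun x _ => A x)
    ((integrable_mul_exp_neg_mul_sq (by norm_num : (0:ℝ) < 2⁻¹)).integrableOn) B
  simpa using h2

lemma integral_abs_gaussianReal :
    ∫ x, |x| ∂(gaussianReal 0 1) = 2 * (Real.sqrt (2*Real.pi))⁻¹ := by
  rw [integral_gaussianReal_eq 1 one_ne_zero]
  have h : (fun x => gaussianPDFReal 0 1 x * |x|)
      = fun x => (Real.sqrt (2*Real.pi))⁻¹ * (|x| * Real.exp (-(2:ℝ)⁻¹ * |x|^2)) := by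
    ext x
    rw [gaussianPDFReal, sq_abs]
    push_cast
    ring_nf
  rw [h, integral_const_mul, integral_comp_abs (f := fun x => x * Real.exp (-(2:ℝ)⁻¹ * x^2)),
    integral_Ioi_xexp]
  ring

lemma integrable_gauss_bound (v : ℝ≥0) (hv : v ≠ 0) {g : ℝ → ℝ} (hg : Continuous g)
    (c d : ℝ) (hb : ∀ x, |g x| ≤ c + d * |x|) : Integrable g (gaussianReal 0 v) := by
  rw [gaussianReal_of_var_ne_zero 0 hv,
    integrable_withDensity_iff (measurable_gaussianPDF 0 v)
      (Filter.Eventually.of_forall fun x => ENNReal.ofReal_lt_top)]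
  have hvpos : (0:ℝ) < (v:ℝ) := by positivity
  have habs : Integrable (fun x : ℝ => |x| * gaussianPDFReal 0 v x) := by
    have heq : (fun x : ℝ => |x| * gaussianPDFReal 0 v x)
        = fun x => (Real.sqrt (2*Real.pi*v))⁻¹ * |x * Real.exp (-(2*(v:ℝ))⁻¹ * x^2)| := by
      ext x
      rw [abs_mul, abs_of_pos (Real.exp_pos _), gaussianPDFReal, sub_zero]
      rw [show -x^2/(2*(v:ℝ)) = -(2*(v:ℝ))⁻¹ * x^2 by field_simp]
      ring
    rw [heq]
    exact ((integrable_mul_exp_neg_mul_sq (by positivity)).abs).const_mul _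
  have hmaj : Integrable (fun x : ℝ =>
      c * gaussianPDFReal 0 v x + d * (|x| * gaussianPDFReal 0 v x)) :=
    ((integrable_gaussianPDFReal 0 v).const_mul c).add (habs.const_mul d)
  refine Integrable.mono' hmaj
    (hg.aestronglyMeasurable.mul
      ((measurable_gaussianPDF 0 v).ennreal_toReal.aestronglyMeasurable)) ?_
  refine Filter.Eventually.of_forall fun x => ?_
  have htr : (gaussianPDF 0 v x).toReal = gaussianPDFReal 0 v x :=
    ENNReal.toReal_ofReal (gaussianPDFReal_nonneg 0 v x)
  rw [Real.norm_eq_abs, htr, abs_mul, abs_of_nonneg (gaussianPDFReal_nonneg 0 v x)]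
  calc |g x| * gaussianPDFReal 0 v x ≤ (c + d * |x|) * gaussianPDFReal 0 v x :=
        mul_le_mul_of_nonneg_right (hb x) (gaussianPDFReal_nonneg 0 v x)
    _ = _ := by ring

lemma gpdf_le (v : ℝ≥0) (hv : 1 ≤ v) (x : ℝ) :
    gaussianPDFReal 0 v x ≤ (Real.sqrt (2*Real.pi))⁻¹ := by
  rw [gaussianPDFReal]
  have h1 : Real.exp (-(x-0)^2/(2*(v:ℝ))) ≤ 1 := by
    rw [Real.exp_le_one_iff]
    have : (0:ℝ) < (v:ℝ) := lt_of_lt_of_le one_pos (by exact_mod_cast hv)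
    apply div_nonpos_of_nonpos_of_nonneg <;> nlinarith [sq_nonneg (x-0)]
  have h2 : (Real.sqrt (2*Real.pi*v))⁻¹ ≤ (Real.sqrt (2*Real.pi))⁻¹ := by
    apply inv_anti₀ (Real.sqrt_pos.mpr (by positivity))
    apply Real.sqrt_le_sqrt
    nlinarith [Real.pi_pos, (by exact_mod_cast hv : (1:ℝ) ≤ (v:ℝ))]
  calc (Real.sqrt (2*Real.pi*v))⁻¹ * Real.exp (-(x-0)^2/(2*(v:ℝ)))
      ≤ (Real.sqrt (2*Real.pi*v))⁻¹ * 1 :=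
        mul_le_mul_of_nonneg_left h1 (by positivity)
    _ ≤ (Real.sqrt (2*Real.pi))⁻¹ := by rw [mul_one]; exact h2

lemma cdf_diff_le (v : ℝ≥0) (hv : 1 ≤ v) (a ε : ℝ) (hε : 0 ≤ ε) :
    ((gaussianReal 0 v) (Iic (a+ε))).toReal
      ≤ ((gaussianReal 0 v) (Iic a)).toReal + ε * (Real.sqrt (2*Real.pi))⁻¹ := by
  have hv0 : v ≠ 0 := by intro h; rw [h] at hv; exact absurd hv (by norm_num)
  have hsplit : Iic (a+ε) = Iic a ∪ Ioc a (a+ε) := (Iic_union_Ioc_eq_Iic (by linarith)).symm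
  rw [hsplit, measure_union (Iic_disjoint_Ioc le_rfl) measurableSet_Ioc,
    ENNReal.toReal_add (measure_ne_top _ _) (measure_ne_top _ _)]
  gcongr
  rw [gaussianReal_apply_eq_integral 0 hv0, ENNReal.toReal_ofReal
    (setIntegral_nonneg measurableSet_Ioc fun x _ => gaussianPDFReal_nonneg 0 v x)]
  calc ∫ x in Ioc a (a+ε), gaussianPDFReal 0 v x
      ≤ ∫ _x in Ioc a (a+ε), (Real.sqrt (2*Real.pi))⁻¹ := by
        apply setIntegral_mono_on (integrable_gaussianPDFReal 0 v).integrableOn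
          (integrableOn_const measure_Ioc_lt_top.ne) measurableSet_Ioc
        exact fun x _ => gpdf_le v hv x
    _ = ε * (Real.sqrt (2*Real.pi))⁻¹ := by
        rw [setIntegral_const, measureReal_def, Real.volume_Ioc, smul_eq_mul, ENNReal.toReal_ofReal (by linarith)]
        ring_nf

lemma gauss_map_eq (ρ : ℝ) :
    gaussianReal 0 (Real.toNNReal (ρ^2)) = (gaussianReal 0 1).map (ρ * ·) := by
  rw [gaussianReal_map_const_mul]
  congr 1
  · ring
  · ext
    simp [Real.coe_toNNReal _ (sq_nonneg ρ)]

lemma lip_g (x ε : ℝ) : LipschitzWith 1 (fun t : ℝ => min ε (max 0 (x + ε - t))) := by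
  have h1 : LipschitzWith 1 (fun t : ℝ => x + ε - t) := by
    apply LipschitzWith.of_dist_le_mul
    intro a b
    rw [Real.dist_eq, Real.dist_eq, NNReal.coe_one, one_mul,
      show x + ε - a - (x + ε - b) = -(a - b) by ring, abs_neg]
  exact (h1.const_max 0).const_min ε

lemma integrable_g (μ : Measure ℝ) [IsProbabilityMeasure μ] (x ε : ℝ) (hε : 0 < ε) :
    Integrable (fun t : ℝ => min ε (max 0 (x + ε - t))) μ := by
  refine Integrable.mono' (integrable_const ε) ((lip_g x ε).continuous.aestronglyMeasurable) ?_
  refine Filter.Eventually.of_forall fun t => ?_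
  rw [Real.norm_eq_abs, abs_of_nonneg (le_min hε.le (le_max_left 0 _))]
  exact min_le_left _ _

lemma step_lower (μ : Measure ℝ) [IsProbabilityMeasure μ] (x ε : ℝ) (hε : 0 < ε) :
    ε * (μ (Iic x)).toReal ≤ ∫ t, min ε (max 0 (x + ε - t)) ∂μ := by
  have hind : Integrable ((Iic x).indicator fun _ => ε) μ :=
    (integrable_const ε).indicator measurableSet_Iic
  calc ε * (μ (Iic x)).toReal = ∫ t, (Iic x).indicator (fun _ => ε) t ∂μ := by
        rw [integral_indicator_const ε measurableSet_Iic, smul_eq_mul, measureReal_def]; ring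
    _ ≤ _ := by
        apply integral_mono hind (integrable_g μ x ε hε)
        intro t
        by_cases ht : t ∈ Iic x
        · rw [indicator_of_mem ht]
          have : ε ≤ x + ε - t := by simp at ht; linarith
          exact le_min le_rfl (le_max_of_le_right this)
        · rw [indicator_of_notMem ht]
          exact le_min hε.le (le_max_left 0 _)

lemma step_upper (μ : Measure ℝ) [IsProbabilityMeasure μ] (x ε : ℝ) (hε : 0 < ε) :
    ∫ t, min ε (max 0 (x + ε - t)) ∂μ ≤ ε * (μ (Iic (x + ε))).toReal := by
  have hind : Integrable ((Iic (x+ε)).indicator fun _ => ε) μ :=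
    (integrable_const ε).indicator measurableSet_Iic
  calc ∫ t, min ε (max 0 (x + ε - t)) ∂μ ≤ ∫ t, (Iic (x+ε)).indicator (fun _ => ε) t ∂μ := by
        apply integral_mono (integrable_g μ x ε hε) hind
        intro t
        by_cases ht : t ∈ Iic (x+ε)
        · rw [indicator_of_mem ht]; exact min_le_left _ _
        · rw [indicator_of_notMem ht]
          have h0 : x + ε - t ≤ 0 := by simp at ht; linarith
          show min ε (max 0 (x + ε - t)) ≤ 0
          exact (min_le_right _ _).trans (max_le le_rfl h0)
    _ = ε * (μ (Iic (x+ε))).toReal := by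
        rw [integral_indicator_const ε measurableSet_Iic, smul_eq_mul, measureReal_def]; ring

lemma lip_abs_bound {h : ℝ → ℝ} (hl : LipschitzWith 1 h) (x : ℝ) : |h x| ≤ |h 0| + 1 * |x| := by
  have hd := hl.dist_le_mul x 0
  rw [Real.dist_eq, Real.dist_eq, NNReal.coe_one, one_mul, sub_zero] at hd
  have := abs_sub_abs_le_abs_sub (h x) (h 0)
  linarith

lemma abs_integral_sub_le (ρ : ℝ) (hρ : 1 ≤ ρ) {h : ℝ → ℝ} (hl : LipschitzWith 1 h) :
    |(∫ x, h x ∂(gaussianReal 0 (Real.toNNReal (ρ^2)))) - ∫ x, h x ∂(gaussianReal 0 1)|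
      ≤ (ρ - 1) * (2 * (Real.sqrt (2*Real.pi))⁻¹) := by
  have hρ0 : 0 < ρ := lt_of_lt_of_le one_pos hρ
  have hint : Integrable h (gaussianReal 0 1) :=
    integrable_gauss_bound 1 one_ne_zero hl.continuous (|h 0|) 1 (lip_abs_bound hl)
  have hintρ : Integrable (fun x => h (ρ * x)) (gaussianReal 0 1) := by
    apply integrable_gauss_bound 1 one_ne_zero (hl.continuous.comp (continuous_const.mul
      continuous_id)) (|h 0|) ρ
    intro x
    have hb := lip_abs_bound hl (ρ * x)
    rw [abs_mul, abs_of_pos hρ0] at hb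
    simpa [Function.comp] using hb
  have hintabs : Integrable (fun x : ℝ => |x|) (gaussianReal 0 1) := by
    apply integrable_gauss_bound 1 one_ne_zero continuous_abs 0 1
    intro x; rw [abs_abs]; linarith [abs_nonneg x]
  rw [gauss_map_eq ρ, integral_map (by fun_prop) hl.continuous.aestronglyMeasurable]
  rw [← integral_sub hintρ hint]
  calc |∫ x, (h (ρ * x) - h x) ∂(gaussianReal 0 1)|
      ≤ ∫ x, |h (ρ * x) - h x| ∂(gaussianReal 0 1) := by
        simpa [Real.norm_eq_abs] using
          norm_integral_le_integral_norm (μ := gaussianReal 0 1) (fun x => h (ρ * x) - h x)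
    _ ≤ ∫ x, (ρ - 1) * |x| ∂(gaussianReal 0 1) := by
        apply integral_mono (hintρ.sub hint).abs (hintabs.const_mul (ρ - 1))
        intro x
        have hd := hl.dist_le_mul (ρ * x) x
        rw [Real.dist_eq, Real.dist_eq, NNReal.coe_one, one_mul] at hd
        calc |h (ρ * x) - h x| ≤ |ρ * x - x| := hd
          _ = (ρ - 1) * |x| := by
              rw [show ρ * x - x = (ρ - 1) * x by ring, abs_mul, abs_of_nonneg (by linarith)]
    _ = (ρ - 1) * (2 * (Real.sqrt (2*Real.pi))⁻¹) := by
        rw [integral_const_mul, integral_abs_gaussianReal]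

end Aux

/-- For every `ρ ≥ 1`,
`d_KS(N(0,ρ²), N(0,1)) ≤ √((4/√(2π))·W₁(N(0,ρ²), N(0,1))) ≤ √(4/π)·(ρ²−1)^{1/4}`. -/
theorem stmt_9 (ρ : ℝ) (hρ : 1 ≤ ρ) :
    dKS (gaussianReal 0 (Real.toNNReal (ρ ^ 2))) (gaussianReal 0 1) ≤
      Real.sqrt (4 / Real.sqrt (2 * Real.pi) *
        W1 (gaussianReal 0 (Real.toNNReal (ρ ^ 2))) (gaussianReal 0 1)) ∧
    Real.sqrt (4 / Real.sqrt (2 * Real.pi) *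
        W1 (gaussianReal 0 (Real.toNNReal (ρ ^ 2))) (gaussianReal 0 1)) ≤
      Real.sqrt (4 / Real.pi) * (ρ ^ 2 - 1) ^ ((1 : ℝ) / 4) := by
  set μ := gaussianReal 0 (Real.toNNReal (ρ ^ 2)) with hμdef
  set ν := gaussianReal 0 1 with hνdef
  set K : ℝ := (Real.sqrt (2 * Real.pi))⁻¹ with hKdef
  have hKpos : 0 < K := by
    rw [hKdef]; positivity
  set W : ℝ := W1 μ ν with hWdef
  haveI : Nonempty {h : ℝ → ℝ // LipschitzWith 1 h} :=
    ⟨⟨fun _ => 0, (LipschitzWith.const 0).weaken zero_le_one⟩⟩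
  have hBdd : BddAbove (Set.range fun h : {h : ℝ → ℝ // LipschitzWith 1 h} =>
      |(∫ x, h.1 x ∂μ) - ∫ x, h.1 x ∂ν|) := by
    refine ⟨(ρ - 1) * (2 * K), ?_⟩
    rintro _ ⟨h, rfl⟩
    exact abs_integral_sub_le ρ hρ h.2
  have hWle : W ≤ (ρ - 1) * (2 * K) := by
    rw [hWdef, W1]
    exact ciSup_le fun h => abs_integral_sub_le ρ hρ h.2
  have hWnonneg : 0 ≤ W := by
    have := le_ciSup hBdd ⟨fun _ => 0, (LipschitzWith.const 0).weaken zero_le_one⟩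
    simpa [W1, hWdef] using this
  have hv2 : (1 : ℝ≥0) ≤ Real.toNNReal (ρ ^ 2) := by
    rw [show (1 : ℝ≥0) = Real.toNNReal 1 by simp]
    exact Real.toNNReal_le_toNNReal (by nlinarith)
  -- key pointwise bound
  have key : ∀ x ε : ℝ, 0 < ε →
      |(μ (Iic x)).toReal - (ν (Iic x)).toReal| ≤ ε * K + W / ε := by
    intro x ε hε
    have hWg := le_ciSup hBdd ⟨fun t => min ε (max 0 (x + ε - t)), lip_g x ε⟩
    rw [← W1, ← hWdef] at hWg
    have hWg1 : (∫ t, min ε (max 0 (x + ε - t)) ∂μ) - ∫ t, min ε (max 0 (x + ε - t)) ∂ν ≤ W :=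
      le_trans (le_abs_self _) hWg
    have hWg2 : (∫ t, min ε (max 0 (x + ε - t)) ∂ν) - ∫ t, min ε (max 0 (x + ε - t)) ∂μ ≤ W :=
      calc (∫ t, min ε (max 0 (x + ε - t)) ∂ν) - ∫ t, min ε (max 0 (x + ε - t)) ∂μ
          ≤ |(∫ t, min ε (max 0 (x + ε - t)) ∂ν) - ∫ t, min ε (max 0 (x + ε - t)) ∂μ| :=
            le_abs_self _
        _ = |(∫ t, min ε (max 0 (x + ε - t)) ∂μ) - ∫ t, min ε (max 0 (x + ε - t)) ∂ν| :=
            abs_sub_comm _ _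
        _ ≤ W := hWg
    have h1 := step_lower μ x ε hε
    have h2 := step_upper ν x ε hε
    have h3 := cdf_diff_le 1 le_rfl x ε hε.le
    have h4 := step_lower ν x ε hε
    have h5 := step_upper μ x ε hε
    have h6 := cdf_diff_le (Real.toNNReal (ρ ^ 2)) hv2 x ε hε.le
    rw [← hνdef, ← hKdef] at h3
    rw [← hμdef, ← hKdef] at h6
    have e : ε * K + W / ε = (ε * (ε * K) + W) / ε := by field_simp
    rw [abs_sub_le_iff]
    constructor
    · rw [e, le_div_iff₀ hε]
      nlinarith [mul_le_mul_of_nonneg_left h3 hε.le]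
    · rw [e, le_div_iff₀ hε]
      nlinarith [mul_le_mul_of_nonneg_left h6 hε.le]
  have hT : Real.sqrt (4 / Real.sqrt (2 * Real.pi) * W) = Real.sqrt (4 * K * W) := by
    rw [div_eq_mul_inv, ← hKdef]
  constructor
  · -- first inequality
    rw [dKS]
    apply ciSup_le
    intro x
    rcases eq_or_lt_of_le hWnonneg with hW0 | hWpos
    · -- W = 0
      rw [← hW0, mul_zero, Real.sqrt_zero]
      apply le_of_forall_pos_le_add
      intro δ hδ
      have hε : 0 < δ * Real.sqrt (2 * Real.pi) := by positivity
      have hk := key x (δ * Real.sqrt (2 * Real.pi)) hε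
      rw [← hW0] at hk
      have hεK : δ * Real.sqrt (2 * Real.pi) * K = δ := by
        rw [hKdef, mul_assoc, mul_inv_cancel₀ (by positivity), mul_one]
      rw [hεK, zero_div, add_zero] at hk
      linarith
    · -- W > 0
      rw [hT]
      set a := Real.sqrt K with hadef
      set b := Real.sqrt W with hbdef
      have hapos : 0 < a := Real.sqrt_pos.mpr hKpos
      have hbpos : 0 < b := Real.sqrt_pos.mpr hWpos
      have hKa : a * a = K := Real.mul_self_sqrt hKpos.le
      have hWb : b * b = W := Real.mul_self_sqrt hWpos.le
      have hε : 0 < b / a := by positivity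
      have hk := key x (b / a) hε
      have e1 : b / a * K = a * b := by
        field_simp
        nlinarith [hKa]
      have e2 : W / (b / a) = a * b := by
        rw [div_div_eq_mul_div]
        field_simp
        nlinarith [hWb]
      have e3 : Real.sqrt (4 * K * W) = 2 * (a * b) := by
        rw [show 4 * K * W = (2 * (a * b))^2 by nlinarith [hKa, hWb]]
        exact Real.sqrt_sq (by positivity)
      rw [e1, e2] at hk
      rw [e3]
      linarith
  · -- second inequality
    rw [hT]
    have hsq : (0:ℝ) ≤ ρ ^ 2 - 1 := by nlinarith
    have hK2 : K * K = (2 * Real.pi)⁻¹ := by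
      rw [hKdef, ← mul_inv, Real.mul_self_sqrt (by positivity)]
    have hle : ρ - 1 ≤ Real.sqrt (ρ ^ 2 - 1) := by
      rw [show ρ - 1 = Real.sqrt ((ρ - 1)^2) by rw [Real.sqrt_sq (by linarith)]]
      apply Real.sqrt_le_sqrt
      nlinarith
    have h4 : 4 * K * W ≤ 4 / Real.pi * Real.sqrt (ρ ^ 2 - 1) := by
      calc 4 * K * W ≤ 4 * K * ((ρ - 1) * (2 * K)) := by
            apply mul_le_mul_of_nonneg_left hWle (by positivity)
        _ = 8 * (K * K) * (ρ - 1) := by ring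
        _ = 4 / Real.pi * (ρ - 1) := by
            rw [hK2]
            field_simp
            ring
        _ ≤ 4 / Real.pi * Real.sqrt (ρ ^ 2 - 1) := by
            apply mul_le_mul_of_nonneg_left hle (by positivity)
    have hrpow : (ρ ^ 2 - 1) ^ ((1 : ℝ) / 4) = Real.sqrt (Real.sqrt (ρ ^ 2 - 1)) := by
      rw [Real.sqrt_eq_rpow, Real.sqrt_eq_rpow, ← Real.rpow_mul hsq]
      norm_num
    rw [hrpow, ← Real.sqrt_mul (by positivity : (0:ℝ) ≤ 4 / Real.pi)]
    exact Real.sqrt_le_sqrt h4
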